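/- arXiv:2304.02926 — 2 statements merged into one kernel-verified Lean document; each statement's English description precedes it below -/
import Mathlib

section
/- Let $S, M, B \in \mathbb{C}^{m\times m}$ be Hermitian matrices, $k_i$ real with $k_i \neq k_j$, $k_i \neq -k_j$, and $f_i$ complex, satisfying $S_{ij} - k_j^2 M_{ij} - \imath k_j B_{ij} = -2\imath k_j \overline{f_i}$ for all $i,j$. Then for $i \neq j$: $M_{ij} = \imath \left( \frac{B_{ij}}{k_i - k_j} - 2 \frac{k_i f_j + k_j \overline{f_i}}{k_i^2 - k_j^2} \right)$. -/
/-! Conjugating the `(j, i)` equation and using hermiticity gives a second equation in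
`S i j`, `M i j`, `B i j`, with `k i` in place of `k j`. Subtracting the two eliminates `S i j`
and leaves a linear equation for `M i j` with coefficient `k i ^ 2 - k j ^ 2 ≠ 0`. -/

open Complex

section

variable {n : Type*} {S M B : Matrix n n ℂ} {k : n → ℝ} {f : n → ℂ}

theorem conj_reflection_eq (hS : S.IsHermitian) (hM : M.IsHermitian) (hB : B.IsHermitian)
    {i j : n} (h : S j i - (k i : ℂ) ^ 2 * M j i - I * (k i : ℂ) * B j i
      = -2 * I * (k i : ℂ) * (starRingEnd ℂ) (f j)) :
    S i j - (k i : ℂ) ^ 2 * M i j + I * (k i : ℂ) * B i j = 2 * I * (k i : ℂ) * f j := by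
  have hS' : starRingEnd ℂ (S j i) = S i j := hS.apply i j
  have hM' : starRingEnd ℂ (M j i) = M i j := hM.apply i j
  have hB' : starRingEnd ℂ (B j i) = B i j := hB.apply i j
  have h' := congrArg (starRingEnd ℂ) h
  simp only [map_sub, map_mul, map_pow, map_neg, conj_I, conj_ofReal, conj_conj, map_ofNat,
    hS', hM', hB'] at h'
  linear_combination h'

theorem sq_sub_sq_mul_offDiag_eq (hS : S.IsHermitian) (hM : M.IsHermitian) (hB : B.IsHermitian)
    (heq : ∀ i j, S i j - (k j : ℂ) ^ 2 * M i j - I * (k j : ℂ) * B i j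
      = -2 * I * (k j : ℂ) * (starRingEnd ℂ) (f i)) (i j : n) :
    ((k i : ℂ) ^ 2 - (k j : ℂ) ^ 2) * M i j
      = I * (((k i : ℂ) + k j) * B i j - 2 * ((k i : ℂ) * f j + k j * (starRingEnd ℂ) (f i))) := by
  linear_combination heq i j - conj_reflection_eq hS hM hB (heq j i)

end

theorem stmt3 {m : ℕ} (S M B : Matrix (Fin m) (Fin m) ℂ)
    (hS : S.IsHermitian) (hM : M.IsHermitian) (hB : B.IsHermitian)
    (k : Fin m → ℝ) (f : Fin m → ℂ)
    (heq : ∀ i j, S i j - (k j : ℂ)^2 * M i j - I * (k j : ℂ) * B i j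
      = -2 * I * (k j : ℂ) * (starRingEnd ℂ) (f i)) :
    ∀ i j, i ≠ j → k i ≠ k j → k i ≠ -(k j) →
      M i j = I * (B i j / ((k i : ℂ) - (k j : ℂ))
        - 2 * ((k i : ℂ) * f j + (k j : ℂ) * (starRingEnd ℂ) (f i))
            / ((k i : ℂ)^2 - (k j : ℂ)^2)) := by
  intro i j _ hk hk'
  have hsub : (k i : ℂ) - k j ≠ 0 := sub_ne_zero.mpr (mod_cast hk)
  have hadd : (k i : ℂ) + k j ≠ 0 := by
    rw [← sub_neg_eq_add]
    exact sub_ne_zero.mpr (mod_cast hk')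
  have hsq : (k i : ℂ) ^ 2 - (k j : ℂ) ^ 2 ≠ 0 := by
    rw [sq_sub_sq]
    exact mul_ne_zero hadd hsub
  calc M i j = I * (((k i : ℂ) + k j) * B i j
          - 2 * ((k i : ℂ) * f j + k j * (starRingEnd ℂ) (f i))) / ((k i : ℂ) ^ 2 - (k j : ℂ) ^ 2) := by
        rw [← sq_sub_sq_mul_offDiag_eq hS hM hB heq i j, mul_div_cancel_left₀ _ hsq]
    _ = _ := by
        rw [sq_sub_sq]
        field_simp
end

section
/- Let $S, M, B \in \mathbb{C}^{m\times m}$ be Hermitian matrices, $k_i$ real with $k_i \neq k_j$ and $k_i \neq -k_j$ for $i \neq j$, and $f_i$ complex, satisfying $S_{ij} - k_j^2 M_{ij} - \imath k_j B_{ij} = -2\imath k_j \overline{f_i}$ for all $i,j$. Then for $i \neq j$: $S_{ij} = \imath \left( \frac{k_i k_j B_{ij}}{k_i - k_j} - 2 \frac{k_j^2 k_i f_j + k_i^2 k_j \overline{f_i}}{k_i^2 - k_j^2} \right)$. -/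
open Complex

/-!
Conjugating the relation at `(j, i)` and using that `S`, `M`, `B` are Hermitian gives a second
linear equation in `S i j`, `M i j`, `B i j`, now with `k i` in place of `k j`. Taking
`k i ^ 2` times the first minus `k j ^ 2` times the second eliminates `M i j`, and dividing
by `k i ^ 2 - k j ^ 2 = (k i - k j) (k i + k j)` gives the formula.
-/

lemma boundary_relation_conj_swap {m : ℕ} {S M B : Matrix (Fin m) (Fin m) ℂ}
    (hS : S.IsHermitian) (hM : M.IsHermitian) (hB : B.IsHermitian)
    {k : Fin m → ℝ} {f : Fin m → ℂ}
    (heq : ∀ i j, S i j - (k j : ℂ)^2 * M i j - I * (k j : ℂ) * B i j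
      = -2 * I * (k j : ℂ) * (starRingEnd ℂ) (f i)) (i j : Fin m) :
    S i j - (k i : ℂ)^2 * M i j + I * (k i : ℂ) * B i j = 2 * I * (k i : ℂ) * f j := by
  have h := congrArg (starRingEnd ℂ) (heq j i)
  simp only [map_sub, map_mul, map_pow, map_neg, map_ofNat, conj_I, conj_ofReal,
    conj_conj] at h
  rw [show (starRingEnd ℂ) (S j i) = S i j from hS.apply i j,
    show (starRingEnd ℂ) (M j i) = M i j from hM.apply i j,
    show (starRingEnd ℂ) (B j i) = B i j from hB.apply i j] at h
  linear_combination h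

lemma eliminate_mass_entry {a b s μ β x y : ℂ} (hsub : a - b ≠ 0) (hadd : a + b ≠ 0)
    (hb : s - b^2 * μ - I * b * β = -2 * I * b * y)
    (ha : s - a^2 * μ + I * a * β = 2 * I * a * x) :
    s = I * (a * b * β / (a - b) - 2 * (b^2 * a * x + a^2 * b * y) / (a^2 - b^2)) := by
  have hsq : a^2 - b^2 ≠ 0 := by
    rw [sq_sub_sq]
    exact mul_ne_zero hadd hsub
  field_simp
  linear_combination (a - b) * (a^2 * hb - b^2 * ha)

theorem stmt4 {m : ℕ} (S M B : Matrix (Fin m) (Fin m) ℂ)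
    (hS : S.IsHermitian) (hM : M.IsHermitian) (hB : B.IsHermitian)
    (k : Fin m → ℝ) (f : Fin m → ℂ)
    (heq : ∀ i j, S i j - (k j : ℂ)^2 * M i j - I * (k j : ℂ) * B i j
      = -2 * I * (k j : ℂ) * (starRingEnd ℂ) (f i)) :
    ∀ i j, i ≠ j → k i ≠ k j → k i ≠ -(k j) →
      S i j = I * ((k i : ℂ) * (k j : ℂ) * B i j / ((k i : ℂ) - (k j : ℂ))
        - 2 * ((k j : ℂ)^2 * (k i : ℂ) * f j
            + (k i : ℂ)^2 * (k j : ℂ) * (starRingEnd ℂ) (f i))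
            / ((k i : ℂ)^2 - (k j : ℂ)^2)) := by
  intro i j _ hk hk'
  have hsub : (k i : ℂ) - k j ≠ 0 := by
    rw [sub_ne_zero]
    exact_mod_cast hk
  have hadd : (k i : ℂ) + k j ≠ 0 := by
    rw [ne_eq, add_eq_zero_iff_eq_neg]
    exact_mod_cast hk'
  exact eliminate_mass_entry hsub hadd (heq i j)
    (boundary_relation_conj_swap hS hM hB heq i j)
end
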